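/- (Lower bound on λ for existence) Let 2 < n, R > 0, p = (n+2)/(n−2), and suppose u ∈ C²([0,R]) is a nontrivial solution of −u'' − (n−1)·coth(x)·u' = λu + |u|^{p−1}u on (0,R) with u'(0) = 0 and u(R) = 0. Then λ ≥ n(n−1)·(∫₀ᴿ u'² L dx)/(∫₀ᴿ u² G' dx), where G(x) = ∫₀ˣ sinh(s)^{n−1} ds and L(x) = G(x)·coth(x) − G'(x)/n. -/

import Mathlib

/-!
Write `G x = ∫₀ˣ sinh^(n-1)` and `S = G' = sinh^(n-1)`, so that the equation reads
`(S u')' = -S (λ u + |u|^(p-1) u)`. Testing it against the multipliers `G u'` and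
`(n-2)/(2n) S u` gives the Pohozaev function
`Q = G (u'²/2 + λu²/2 + |u|^(p+1)/(p+1)) + (n-2)/(2n) S u u'`, whose derivative is
`λ/n u² S - (n-1) u'² L`: the nonlinear terms cancel because `p + 1 = 2n/(n-2)` is the critical
exponent. Since `G 0 = S 0 = 0` and `u R = 0`, integrating over `[0, R]` gives
`λ/n ∫ u² S - (n-1) ∫ u'² L = G R u'(R)²/2 ≥ 0`, and `∫ u² S > 0` for nontrivial `u`.
-/

open Real Set Filter Topology MeasureTheory intervalIntegral

noncomputable def sinhPowIntegral (n x : ℝ) : ℝ := ∫ s in (0:ℝ)..x, sinh s ^ (n - 1)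

noncomputable def pohozaevWeight (n x : ℝ) : ℝ :=
  sinhPowIntegral n x * (cosh x / sinh x) - sinh x ^ (n - 1) / n

section SinhPowIntegral

variable {n : ℝ}

theorem continuous_sinh_rpow (hn : 1 ≤ n) : Continuous fun x => sinh x ^ (n - 1) :=
  (continuous_rpow_const (by linarith)).comp continuous_sinh

theorem hasDerivAt_sinhPowIntegral (hn : 1 ≤ n) (x : ℝ) :
    HasDerivAt (sinhPowIntegral n) (sinh x ^ (n - 1)) x :=
  integral_hasDerivAt_right ((continuous_sinh_rpow hn).intervalIntegrable 0 x)
    (continuous_sinh_rpow hn).stronglyMeasurable.stronglyMeasurableAtFilter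
    (continuous_sinh_rpow hn).continuousAt

theorem continuous_sinhPowIntegral (hn : 1 ≤ n) : Continuous (sinhPowIntegral n) :=
  continuous_iff_continuousAt.2 fun x => (hasDerivAt_sinhPowIntegral hn x).continuousAt

theorem sinhPowIntegral_zero : sinhPowIntegral n 0 = 0 := integral_same

theorem sinhPowIntegral_nonneg {x : ℝ} (hx : 0 ≤ x) : 0 ≤ sinhPowIntegral n x :=
  integral_nonneg hx fun _ hs => rpow_nonneg (sinh_nonneg_iff.2 hs.1) _

theorem sinhPowIntegral_le_mul (hn : 1 ≤ n) {x : ℝ} (hx : 0 ≤ x) :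
    sinhPowIntegral n x ≤ x * sinh x ^ (n - 1) := by
  have hmono : ∀ s ∈ Icc 0 x, sinh s ^ (n - 1) ≤ sinh x ^ (n - 1) := fun s hs =>
    rpow_le_rpow (sinh_nonneg_iff.2 hs.1) (sinh_le_sinh.2 hs.2) (by linarith)
  simpa [sinhPowIntegral] using integral_mono_on (μ := volume) hx
    ((continuous_sinh_rpow hn).intervalIntegrable 0 x) intervalIntegrable_const hmono

theorem tendsto_sinhPowIntegral_mul_coth (hn : 2 ≤ n) :
    Tendsto (fun x => sinhPowIntegral n x * (cosh x / sinh x)) (𝓝[≥] 0) (𝓝 0) := by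
  have hbound : ∀ x ∈ Ici (0:ℝ),
      sinhPowIntegral n x * (cosh x / sinh x) ≤ x * sinh x ^ (n - 2) * cosh x := by
    intro x hx
    rcases (mem_Ici.1 hx).eq_or_lt with rfl | hx
    · simp [sinhPowIntegral_zero]
    have hs := sinh_pos_iff.2 hx
    calc sinhPowIntegral n x * (cosh x / sinh x)
        ≤ x * sinh x ^ (n - 1) * (cosh x / sinh x) :=
          mul_le_mul_of_nonneg_right (sinhPowIntegral_le_mul (by linarith) hx.le)
            (div_pos (cosh_pos x) hs).le
      _ = x * sinh x ^ (n - 2) * cosh x := by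
          rw [show n - 1 = n - 2 + 1 by ring, rpow_add_one hs.ne']
          field_simp
  have hupper : Tendsto (fun x => x * sinh x ^ (n - 2) * cosh x) (𝓝[≥] 0) (𝓝 0) := by
    have hc : Continuous fun x => x * sinh x ^ (n - 2) * cosh x :=
      (continuous_id.mul ((continuous_rpow_const (by linarith)).comp continuous_sinh)).mul
        continuous_cosh
    simpa using (hc.tendsto 0).mono_left nhdsWithin_le_nhds
  refine tendsto_of_tendsto_of_tendsto_of_le_of_le' tendsto_const_nhds hupper ?_ ?_
  · filter_upwards [self_mem_nhdsWithin] with x hx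
    exact mul_nonneg (sinhPowIntegral_nonneg hx)
      (div_nonneg (cosh_pos x).le (sinh_nonneg_iff.2 hx))
  · filter_upwards [self_mem_nhdsWithin] with x hx using hbound x hx

theorem continuousOn_pohozaevWeight (hn : 2 ≤ n) : ContinuousOn (pohozaevWeight n) (Ici 0) := by
  refine ContinuousOn.sub ?_ ((continuous_sinh_rpow (by linarith)).continuousOn.div_const n)
  intro x hx
  rcases (mem_Ici.1 hx).eq_or_lt with rfl | hx
  · simpa [ContinuousWithinAt, sinhPowIntegral_zero] using tendsto_sinhPowIntegral_mul_coth hn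
  · exact ((continuous_sinhPowIntegral (by linarith)).continuousAt.mul
      (continuous_cosh.continuousAt.div continuous_sinh.continuousAt
        (sinh_pos_iff.2 hx).ne')).continuousWithinAt

end SinhPowIntegral

theorem abs_rpow_add_one_eq_mul_sq {p : ℝ} (hp : p + 1 ≠ 0) (t : ℝ) :
    |t| ^ (p + 1) = |t| ^ (p - 1) * t ^ 2 := by
  rw [show p + 1 = (p - 1) + 2 by ring] at hp ⊢
  rw [rpow_add' (abs_nonneg t) hp, rpow_two, sq_abs]

noncomputable def pohozaevFunction (n lam p : ℝ) (u u' : ℝ → ℝ) (x : ℝ) : ℝ :=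
  sinhPowIntegral n x * (u' x ^ 2 / 2 + lam * u x ^ 2 / 2 + |u x| ^ (p + 1) / (p + 1))
    + (n - 2) / (2 * n) * sinh x ^ (n - 1) * u x * u' x

section Pohozaev

variable {n lam p : ℝ} {u u' u'' : ℝ → ℝ}

theorem pohozaevFunction_zero (hn : 1 < n) : pohozaevFunction n lam p u u' 0 = 0 := by
  simp [pohozaevFunction, sinhPowIntegral_zero, zero_rpow (sub_ne_zero.2 hn.ne')]

theorem pohozaevFunction_of_eq_zero (hp : p + 1 ≠ 0) {x : ℝ} (hx : u x = 0) :
    pohozaevFunction n lam p u u' x = sinhPowIntegral n x * u' x ^ 2 / 2 := by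
  simp [pohozaevFunction, hx, zero_rpow hp]
  ring

theorem continuousOn_pohozaevFunction (hn : 1 ≤ n) (hp : -1 < p) {s : Set ℝ}
    (hu : ContinuousOn u s) (hu' : ContinuousOn u' s) :
    ContinuousOn (pohozaevFunction n lam p u u') s := by
  have hG := (continuous_sinhPowIntegral hn).continuousOn (s := s)
  have hS := (continuous_sinh_rpow hn).continuousOn (s := s)
  have habs : ContinuousOn (fun x => |u x| ^ (p + 1)) s :=
    ((continuous_rpow_const (by linarith)).comp continuous_abs).comp_continuousOn hu
  unfold pohozaevFunction
  fun_prop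

theorem hasDerivAt_pohozaevFunction (hn : 2 < n) (hp : p = (n + 2) / (n - 2)) {x : ℝ}
    (hx : 0 < x) (hu : HasDerivAt u (u' x) x) (hu' : HasDerivAt u' (u'' x) x)
    (hode : -u'' x - (n - 1) * (cosh x / sinh x) * u' x = lam * u x + |u x| ^ (p - 1) * u x) :
    HasDerivAt (pohozaevFunction n lam p u u')
      (lam / n * (u x ^ 2 * sinh x ^ (n - 1)) - (n - 1) * (u' x ^ 2 * pohozaevWeight n x)) x := by
  have hn0 : n ≠ 0 := by linarith
  have hn2 : n - 2 ≠ 0 := by linarith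
  have hs : sinh x ≠ 0 := (sinh_pos_iff.2 hx).ne'
  have hp1 : p + 1 = 2 * n / (n - 2) := by rw [hp]; field_simp; ring
  have hp1pos : 1 < p + 1 := by rw [hp1, lt_div_iff₀ (by linarith)]; linarith
  have hG := hasDerivAt_sinhPowIntegral (by linarith : 1 ≤ n) x
  have hS : HasDerivAt (fun y => sinh y ^ (n - 1))
      ((n - 1) * sinh x ^ (n - 1 - 1) * cosh x) x := by
    simpa [Function.comp_def] using
      (hasDerivAt_rpow_const (Or.inl hs)).comp x (hasDerivAt_sinh x)
  have habs : HasDerivAt (fun y => |u y| ^ (p + 1))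
      ((p + 1) * |u x| ^ (p - 1) * u x * u' x) x := by
    have h := (hasDerivAt_abs_rpow (u x) hp1pos).comp x hu
    rwa [show p + 1 - 2 = p - 1 by ring] at h
  have hQ := show HasDerivAt (pohozaevFunction n lam p u u') _ x from
    (hG.fun_mul ((((hu'.fun_pow 2).div_const 2).fun_add
      (((hu.fun_pow 2).const_mul lam).div_const 2)).fun_add (habs.div_const (p + 1)))).fun_add
      (((hS.const_mul ((n - 2) / (2 * n))).fun_mul hu).fun_mul hu')
  refine hQ.congr_deriv ?_
  have hu''x : u'' x = -(n - 1) * (cosh x / sinh x) * u' x - lam * u x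
      - |u x| ^ (p - 1) * u x := by linarith
  have hSx : sinh x ^ (n - 1 - 1) = sinh x ^ (n - 1) / sinh x := rpow_sub_one hs _
  rw [abs_rpow_add_one_eq_mul_sq (zero_lt_one.trans hp1pos).ne', hp1, hSx, hu''x,
    pohozaevWeight]
  norm_num
  field_simp
  ring

theorem pohozaev_identity {R : ℝ} (hn : 2 < n) (hR : 0 < R) (hp : p = (n + 2) / (n - 2))
    (hu : ∀ x ∈ Icc 0 R, HasDerivAt u (u' x) x) (hu' : ∀ x ∈ Icc 0 R, HasDerivAt u' (u'' x) x)
    (hode : ∀ x ∈ Ioo 0 R,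
      -u'' x - (n - 1) * (cosh x / sinh x) * u' x = lam * u x + |u x| ^ (p - 1) * u x)
    (huR : u R = 0) :
    lam / n * (∫ x in 0..R, u x ^ 2 * sinh x ^ (n - 1))
        - (n - 1) * ∫ x in 0..R, u' x ^ 2 * pohozaevWeight n x
      = sinhPowIntegral n R * u' R ^ 2 / 2 := by
  have hp1 : -1 < p := by
    rw [hp]; exact neg_one_lt_zero.trans (div_pos (by linarith) (by linarith))
  have hucont : ContinuousOn u (Icc 0 R) := fun x hx =>
    (hu x hx).continuousAt.continuousWithinAt
  have hu'cont : ContinuousOn u' (Icc 0 R) := fun x hx =>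
    (hu' x hx).continuousAt.continuousWithinAt
  have hint₁ : IntervalIntegrable (fun x => u x ^ 2 * sinh x ^ (n - 1)) volume 0 R :=
    ContinuousOn.intervalIntegrable_of_Icc hR.le <|
      (hucont.pow 2).mul (continuous_sinh_rpow (by linarith)).continuousOn
  have hint₂ : IntervalIntegrable (fun x => u' x ^ 2 * pohozaevWeight n x) volume 0 R :=
    ContinuousOn.intervalIntegrable_of_Icc hR.le <|
      (hu'cont.pow 2).mul ((continuousOn_pohozaevWeight hn.le).mono Icc_subset_Ici_self)
  rw [← intervalIntegral.integral_const_mul, ← intervalIntegral.integral_const_mul,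
    ← integral_sub (hint₁.const_mul _) (hint₂.const_mul _),
    integral_eq_sub_of_hasDerivAt_of_le hR.le
      (continuousOn_pohozaevFunction (by linarith) hp1 hucont hu'cont)
      (fun x hx => hasDerivAt_pohozaevFunction hn hp hx.1 (hu x (Ioo_subset_Icc_self hx))
        (hu' x (Ioo_subset_Icc_self hx)) (hode x hx))
      ((hint₁.const_mul _).sub (hint₂.const_mul _)),
    pohozaevFunction_of_eq_zero (by linarith) huR, pohozaevFunction_zero (by linarith), sub_zero]

end Pohozaev

theorem intervalIntegral_pos_of_nonneg_of_continuousAt_pos {f : ℝ → ℝ} {a b y : ℝ}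
    (hfi : IntervalIntegrable f volume a b) (hf : ∀ x ∈ Ioo a b, 0 ≤ f x) (hy : y ∈ Ioo a b)
    (hcont : ContinuousAt f y) (hfy : 0 < f y) : 0 < ∫ x in a..b, f x := by
  have hab : a < b := hy.1.trans hy.2
  have hf' : 0 ≤ᵐ[volume.restrict (uIoc a b)] f := by
    rw [EventuallyLE, uIoc_of_le hab.le]
    refine ae_restrict_of_ae_eq_of_ae_restrict Ioo_ae_eq_Ioc ?_
    rw [ae_restrict_iff' measurableSet_Ioo]
    exact ae_of_all _ hf
  obtain ⟨o, hfo, ho, hyo⟩ := eventually_nhds_iff.1 (hcont.eventually (lt_mem_nhds hfy))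
  rw [integral_pos_iff_support_of_nonneg_ae' hf' hfi]
  refine ⟨hab, ((ho.inter isOpen_Ioo).measure_pos volume ⟨y, hyo, hy⟩).trans_le (measure_mono ?_)⟩
  rintro x ⟨hxo, hx⟩
  exact ⟨(hfo x hxo).ne', Ioo_subset_Ioc_self hx⟩

theorem integral_sq_mul_sinh_rpow_pos {n R : ℝ} {u : ℝ → ℝ} (hn : 1 ≤ n) (hR : 0 < R)
    (hu : ∀ x ∈ Icc 0 R, ContinuousAt u x) (hne : ∃ x ∈ Icc 0 R, u x ≠ 0) :
    0 < ∫ x in 0..R, u x ^ 2 * sinh x ^ (n - 1) := by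
  obtain ⟨x₀, hx₀, hux₀⟩ := hne
  obtain ⟨y, huy, hy⟩ : ∃ y, u y ≠ 0 ∧ y ∈ Ioo 0 R := by
    have hx₀' : x₀ ∈ closure (Ioo 0 R) := by rwa [closure_Ioo hR.ne]
    exact mem_closure_iff_nhds.1 hx₀' _ ((hu x₀ hx₀).eventually_ne hux₀)
  have hS := continuous_sinh_rpow hn
  refine intervalIntegral_pos_of_nonneg_of_continuousAt_pos
    (((ContinuousOn.pow (fun x hx => (hu x hx).continuousWithinAt) 2).mul
      hS.continuousOn).intervalIntegrable_of_Icc hR.le)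
    (fun x hx => mul_nonneg (sq_nonneg _) (rpow_nonneg (sinh_nonneg_iff.2 hx.1.le) _)) hy
    (((hu y (Ioo_subset_Icc_self hy)).pow 2).mul hS.continuousAt)
    (mul_pos (pow_two_pos_of_ne_zero huy) (rpow_pos_of_pos (sinh_pos_iff.2 hy.1) _))

theorem lambda_lower_bound_general (n R lam : ℝ) (hn : 2 < n) (hR : 0 < R)
    (p : ℝ) (hp : p = (n + 2) / (n - 2))
    (u u' u'' : ℝ → ℝ)
    (hu : ∀ x ∈ Set.Icc (0:ℝ) R, HasDerivAt u (u' x) x)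
    (hu' : ∀ x ∈ Set.Icc (0:ℝ) R, HasDerivAt u' (u'' x) x)
    (hode : ∀ x ∈ Set.Ioo (0:ℝ) R,
      -u'' x - (n - 1) * (Real.cosh x / Real.sinh x) * u' x
        = lam * u x + |u x| ^ (p - 1) * u x)
    (huR : u R = 0)
    (hnontriv : ∃ x ∈ Set.Icc (0:ℝ) R, u x ≠ 0) :
    lam ≥ n * (n - 1) *
        (∫ x in (0:ℝ)..R, u' x ^ 2 *
          ((∫ s in (0:ℝ)..x, Real.sinh s ^ (n - 1)) * (Real.cosh x / Real.sinh x)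
            - Real.sinh x ^ (n - 1) / n))
      / ∫ x in (0:ℝ)..R, u x ^ 2 * Real.sinh x ^ (n - 1) := by
  have hI₁ := integral_sq_mul_sinh_rpow_pos (n := n) (by linarith) hR
    (fun x hx => (hu x hx).continuousAt) hnontriv
  have hbdry : 0 ≤ sinhPowIntegral n R * u' R ^ 2 / 2 := by
    have := sinhPowIntegral_nonneg (n := n) hR.le
    positivity
  have hid := pohozaev_identity hn hR hp hu hu' hode huR
  change _ ≥ n * (n - 1) * (∫ x in 0..R, u' x ^ 2 * pohozaevWeight n x) / _
  rw [ge_iff_le, div_le_iff₀ hI₁]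
  calc n * (n - 1) * (∫ x in 0..R, u' x ^ 2 * pohozaevWeight n x)
      = lam * (∫ x in 0..R, u x ^ 2 * sinh x ^ (n - 1))
          - n * (sinhPowIntegral n R * u' R ^ 2 / 2) := by
        rw [← hid]; field_simp; ring
    _ ≤ lam * ∫ x in 0..R, u x ^ 2 * sinh x ^ (n - 1) :=
        sub_le_self _ (mul_nonneg (by linarith) hbdry)

theorem lambda_lower_bound (n R lam : ℝ) (hn : 2 < n) (hR : 0 < R)
    (p : ℝ) (hp : p = (n + 2) / (n - 2))
    (u u' u'' : ℝ → ℝ)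
    (hu : ∀ x ∈ Set.Icc (0:ℝ) R, HasDerivAt u (u' x) x)
    (hu' : ∀ x ∈ Set.Icc (0:ℝ) R, HasDerivAt u' (u'' x) x)
    (hu'' : ContinuousOn u'' (Set.Icc (0:ℝ) R))
    (hode : ∀ x ∈ Set.Ioo (0:ℝ) R,
      -u'' x - (n - 1) * (Real.cosh x / Real.sinh x) * u' x
        = lam * u x + |u x| ^ (p - 1) * u x)
    (hu'0 : u' 0 = 0) (huR : u R = 0)
    (hnontriv : ∃ x ∈ Set.Icc (0:ℝ) R, u x ≠ 0) :
    lam ≥ n * (n - 1) *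
        (∫ x in (0:ℝ)..R, u' x ^ 2 *
          ((∫ s in (0:ℝ)..x, Real.sinh s ^ (n - 1)) * (Real.cosh x / Real.sinh x)
            - Real.sinh x ^ (n - 1) / n))
      / ∫ x in (0:ℝ)..R, u x ^ 2 * Real.sinh x ^ (n - 1) :=
  lambda_lower_bound_general n R lam hn hR p hp u u' u'' hu hu' hode huR hnontriv
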